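/- The degeneracy is Hölder-continuous with exponent 1/2 with respect to the cut distance: for any two graphons w, w', |δ(w) − δ(w')| ≤ 2√(d_□(w,w')), where d_□ is the cut norm distance. -/

import Mathlib

open MeasureTheory Set Filter

/-- A graphon: symmetric measurable `w : [0,1]² → [0,1]` (stated on all of ℝ²). -/
def Graphon (w : ℝ → ℝ → ℝ) : Prop :=
  Measurable (Function.uncurry w) ∧ (∀ x y, w x y = w y x) ∧
    ∀ x y, w x y ∈ Set.Icc (0 : ℝ) 1

/-- Degree of `x` restricted to `K`: `d_w^K(x) = ∫_K w(x,y) dy`. -/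
noncomputable def degK (w : ℝ → ℝ → ℝ) (K : Set ℝ) (x : ℝ) : ℝ := ∫ y in K, w x y

/-- Iterated peeling sets: `coreIter w κ n = K^{n+1}_κ(w)` (so index 0 is `K¹`). -/
noncomputable def coreIter (w : ℝ → ℝ → ℝ) (κ : ℝ) : ℕ → Set ℝ
  | 0 => {x ∈ Set.Icc (0 : ℝ) 1 | κ ≤ degK w (Set.Icc 0 1) x}
  | n + 1 => {x ∈ coreIter w κ n | κ ≤ degK w (coreIter w κ n) x}

/-- The κ-core `K_κ(w) = ⋂ₙ K^n_κ(w)`. -/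
noncomputable def core (w : ℝ → ℝ → ℝ) (κ : ℝ) : Set ℝ := ⋂ n, coreIter w κ n

/-- Shell index `δ_x(w) = sup {κ : x ∈ K_κ(w)}`. -/
noncomputable def shell (w : ℝ → ℝ → ℝ) (x : ℝ) : ℝ := sSup {κ | x ∈ core w κ}

/-- Degeneracy `δ(w) = sup {κ : |K_κ(w)| > 0}`. -/
noncomputable def degen (w : ℝ → ℝ → ℝ) : ℝ := sSup {κ | 0 < volume (core w κ)}

/-- Cut-norm distance `d_□`. -/
noncomputable def cutDist (w w' : ℝ → ℝ → ℝ) : ℝ :=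
  sSup {r | ∃ S T : Set ℝ, MeasurableSet S ∧ MeasurableSet T ∧
    S ⊆ Set.Icc 0 1 ∧ T ⊆ Set.Icc 0 1 ∧
    r = |∫ x in S, ∫ y in T, (w x y - w' x y)|}

/-- A measure-preserving map of `[0,1]`. -/
def MPMap (σ : ℝ → ℝ) : Prop :=
  Measurable σ ∧ Set.MapsTo σ (Set.Icc 0 1) (Set.Icc 0 1) ∧
    ∀ A : Set ℝ, MeasurableSet A → A ⊆ Set.Icc 0 1 →
      volume (σ ⁻¹' A ∩ Set.Icc 0 1) = volume A

/-- Cut metric `δ_□(w,w') = inf_σ d_□(w^σ, w')`. -/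
noncomputable def cutMetric (w w' : ℝ → ℝ → ℝ) : ℝ :=
  sInf {r | ∃ σ : ℝ → ℝ, MPMap σ ∧ r = cutDist (fun x y => w (σ x) (σ y)) w'}

section Helpers

open scoped ENNReal

variable {w w' : ℝ → ℝ → ℝ}

lemma integrableOn_w (hw : Graphon w) (x : ℝ) {K : Set ℝ} (hK : volume K < ⊤) :
    IntegrableOn (fun y => w x y) K := by
  have h1 : IntegrableOn (fun _ => (1:ℝ)) K volume := integrableOn_const hK.ne
  refine Integrable.mono' h1 (hw.1.of_uncurry_left.aestronglyMeasurable) ?_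
  filter_upwards with y
  rw [Real.norm_eq_abs, abs_le]
  exact ⟨by linarith [(hw.2.2 x y).1], (hw.2.2 x y).2⟩

lemma degK_measurable (hw : Graphon w) (K : Set ℝ) : Measurable (degK w K) :=
  (hw.1.stronglyMeasurable.integral_prod_right'
    (ν := volume.restrict K)).measurable

lemma degK_nonneg (hw : Graphon w) (K : Set ℝ) (x : ℝ) : 0 ≤ degK w K x :=
  integral_nonneg fun y => (hw.2.2 x y).1

lemma degK_le (hw : Graphon w) {K : Set ℝ} (hK : MeasurableSet K)
    (hKfin : volume K < ⊤) (x : ℝ) : degK w K x ≤ (volume K).toReal := by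
  have h := setIntegral_mono_on (integrableOn_w hw x hKfin)
    (integrableOn_const hKfin.ne) hK (fun y _ => (hw.2.2 x y).2)
  simpa [degK, smul_eq_mul, Measure.real] using h

lemma degK_mono (hw : Graphon w) {K L : Set ℝ} (hKL : K ⊆ L)
    (hLfin : volume L < ⊤) (x : ℝ) : degK w K x ≤ degK w L x :=
  setIntegral_mono_set (integrableOn_w hw x hLfin)
    (Eventually.of_forall fun y => (hw.2.2 x y).1) hKL.eventuallyLE

end Helpers

section CoreFacts

open scoped ENNReal

variable {w w' : ℝ → ℝ → ℝ}

lemma coreIter_subset_Icc (w : ℝ → ℝ → ℝ) (κ : ℝ) :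
    ∀ n, coreIter w κ n ⊆ Set.Icc 0 1
  | 0 => sep_subset _ _
  | n + 1 => (sep_subset _ _).trans (coreIter_subset_Icc w κ n)

lemma coreIter_fin (w : ℝ → ℝ → ℝ) (κ : ℝ) (n : ℕ) : volume (coreIter w κ n) < ⊤ :=
  lt_of_le_of_lt (measure_mono (coreIter_subset_Icc w κ n))
    (by rw [Real.volume_Icc]; exact ENNReal.ofReal_lt_top)

lemma coreIter_antitone (w : ℝ → ℝ → ℝ) (κ : ℝ) : Antitone (coreIter w κ) :=
  antitone_nat_of_succ_le fun n => sep_subset _ _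

lemma coreIter_measurable (hw : Graphon w) (κ : ℝ) :
    ∀ n, MeasurableSet (coreIter w κ n)
  | 0 => by
    have : coreIter w κ 0 = Set.Icc 0 1 ∩ degK w (Set.Icc 0 1) ⁻¹' Set.Ici κ := rfl
    rw [this]
    exact measurableSet_Icc.inter ((degK_measurable hw _) measurableSet_Ici)
  | n + 1 => by
    have : coreIter w κ (n+1) =
        coreIter w κ n ∩ degK w (coreIter w κ n) ⁻¹' Set.Ici κ := rfl
    rw [this]
    exact (coreIter_measurable hw κ n).inter ((degK_measurable hw _) measurableSet_Ici)

lemma core_subset_Icc (w : ℝ → ℝ → ℝ) (κ : ℝ) : core w κ ⊆ Set.Icc 0 1 :=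
  (Set.iInter_subset _ 0).trans (coreIter_subset_Icc w κ 0)

lemma core_fin (w : ℝ → ℝ → ℝ) (κ : ℝ) : volume (core w κ) < ⊤ :=
  lt_of_le_of_lt (measure_mono (core_subset_Icc w κ))
    (by rw [Real.volume_Icc]; exact ENNReal.ofReal_lt_top)

lemma core_measurable (hw : Graphon w) (κ : ℝ) : MeasurableSet (core w κ) :=
  MeasurableSet.iInter fun n => coreIter_measurable hw κ n

lemma core_subset_coreIter (w : ℝ → ℝ → ℝ) (κ : ℝ) (n : ℕ) :
    core w κ ⊆ coreIter w κ n := Set.iInter_subset _ n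

/-- every point of the core has degree at least κ into the core -/
lemma core_minDeg (hw : Graphon w) (κ : ℝ) {x : ℝ} (hx : x ∈ core w κ) :
    κ ≤ degK w (core w κ) x := by
  set C := core w κ with hC
  have hCm : MeasurableSet C := core_measurable hw κ
  -- κ ≤ degK w (coreIter n) x for all n
  have h1 : ∀ n, κ ≤ degK w (coreIter w κ n) x := by
    intro n
    have hx' : x ∈ coreIter w κ (n+1) := core_subset_coreIter w κ (n+1) hx
    exact hx'.2
  -- decomposition
  have h2 : ∀ n, degK w (coreIter w κ n) x
      = degK w C x + degK w (coreIter w κ n \ C) x := by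
    intro n
    have hunion : C ∪ (coreIter w κ n \ C) = coreIter w κ n :=
      Set.union_diff_cancel (core_subset_coreIter w κ n)
    have := setIntegral_union (f := fun y => w x y) (μ := volume)
      (disjoint_sdiff_right (s := C)) (((coreIter_measurable hw κ n)).diff hCm)
      (integrableOn_w hw x (core_fin w κ))
      (integrableOn_w hw x (lt_of_le_of_lt (measure_mono Set.diff_subset)
        (coreIter_fin w κ n)))
    rw [hunion] at this
    exact this
  have h3 : ∀ n, degK w (coreIter w κ n \ C) x
      ≤ (volume (coreIter w κ n \ C)).toReal := fun n =>
    degK_le hw ((coreIter_measurable hw κ n).diff hCm)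
      (lt_of_le_of_lt (measure_mono Set.diff_subset) (coreIter_fin w κ n)) x
  -- the measure of the difference tends to 0
  have hiInter : ⋂ n, (coreIter w κ n \ C) = ∅ := by
    refine Set.eq_empty_of_forall_notMem fun y hy => ?_
    have h := fun n => Set.mem_iInter.1 hy n
    exact (h 0).2 (Set.mem_iInter.2 fun n => (h n).1)
  have htend : Tendsto (fun n => (volume (coreIter w κ n \ C)).toReal) atTop (nhds 0) := by
    have h4 : Tendsto (fun n => volume (coreIter w κ n \ C)) atTop (nhds 0) := by
      have := tendsto_measure_iInter_atTop (μ := volume)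
        (s := fun n => coreIter w κ n \ C)
        (fun n => ((coreIter_measurable hw κ n).diff hCm).nullMeasurableSet)
        (fun m n hmn => Set.diff_subset_diff_left (coreIter_antitone w κ hmn))
        ⟨0, (lt_of_le_of_lt (measure_mono Set.diff_subset) (coreIter_fin w κ 0)).ne⟩
      rwa [hiInter, measure_empty] at this
    simpa [Function.comp_def] using (ENNReal.tendsto_toReal (by simp)).comp h4
  have h5 : ∀ n, κ ≤ degK w C x + (volume (coreIter w κ n \ C)).toReal := fun n =>
    (h1 n).trans (by rw [h2 n]; linarith [h3 n])
  have := ge_of_tendsto' (f := fun n => degK w C x + (volume (coreIter w κ n \ C)).toReal)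
    (by simpa using (tendsto_const_nhds (x := degK w C x)).add htend) h5
  simpa using this

end CoreFacts

section CutDist

open scoped ENNReal

variable {w w' : ℝ → ℝ → ℝ}

lemma cutSet_bddAbove (hw : Graphon w) (hw' : Graphon w') :
    ∀ r ∈ {r | ∃ S T : Set ℝ, MeasurableSet S ∧ MeasurableSet T ∧
      S ⊆ Set.Icc 0 1 ∧ T ⊆ Set.Icc 0 1 ∧
      r = |∫ x in S, ∫ y in T, (w x y - w' x y)|}, r ≤ 1 := by
  rintro r ⟨S, T, hSm, hTm, hS1, hT1, rfl⟩
  have hSfin : volume S < ⊤ := lt_of_le_of_lt (measure_mono hS1)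
    (by rw [Real.volume_Icc]; exact ENNReal.ofReal_lt_top)
  have hTfin : volume T < ⊤ := lt_of_le_of_lt (measure_mono hT1)
    (by rw [Real.volume_Icc]; exact ENNReal.ofReal_lt_top)
  have hS1' : (volume S).toReal ≤ 1 := by
    have := measure_mono hS1 (μ := volume)
    rw [Real.volume_Icc] at this
    calc (volume S).toReal ≤ (ENNReal.ofReal (1-0)).toReal :=
          ENNReal.toReal_mono (by simp) this
      _ ≤ 1 := by simp
  have hT1' : (volume T).toReal ≤ 1 := by
    have := measure_mono hT1 (μ := volume)
    rw [Real.volume_Icc] at this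
    calc (volume T).toReal ≤ (ENNReal.ofReal (1-0)).toReal :=
          ENNReal.toReal_mono (by simp) this
      _ ≤ 1 := by simp
  have hinner : ∀ x ∈ S, ‖∫ y in T, (w x y - w' x y)‖ ≤ 1 := by
    intro x _
    have h1 := norm_setIntegral_le_of_norm_le_const (C := (1:ℝ)) (f := fun y => w x y - w' x y) hTfin
      (fun y _ => by
        rw [Real.norm_eq_abs, abs_le]
        constructor <;> nlinarith [(hw.2.2 x y).1, (hw.2.2 x y).2,
          (hw'.2.2 x y).1, (hw'.2.2 x y).2])
    calc ‖∫ y in T, (w x y - w' x y)‖ ≤ 1 * (volume T).toReal := h1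
      _ ≤ 1 := by simpa using hT1'
  have hmeas : AEStronglyMeasurable (fun x => ∫ y in T, (w x y - w' x y))
      (volume.restrict S) := by
    have : StronglyMeasurable fun x => ∫ y, (fun p : ℝ × ℝ => w p.1 p.2 - w' p.1 p.2) (x, y)
        ∂(volume.restrict T) :=
      ((hw.1.sub hw'.1).stronglyMeasurable).integral_prod_right'
    exact this.measurable.aestronglyMeasurable
  have h2 := norm_setIntegral_le_of_norm_le_const (C := (1:ℝ)) hSfin hinner
  calc |∫ x in S, ∫ y in T, (w x y - w' x y)| ≤ 1 * (volume S).toReal := h2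
    _ ≤ 1 := by simpa using hS1'

lemma cutDist_nonneg (hw : Graphon w) (hw' : Graphon w') : 0 ≤ cutDist w w' := by
  apply le_csSup ⟨1, fun r hr => cutSet_bddAbove hw hw' r hr⟩
  exact ⟨∅, ∅, MeasurableSet.empty, MeasurableSet.empty, Set.empty_subset _,
    Set.empty_subset _, by simp⟩

lemma cutDist_bound (hw : Graphon w) (hw' : Graphon w') {S T : Set ℝ}
    (hSm : MeasurableSet S) (hTm : MeasurableSet T)
    (hS1 : S ⊆ Set.Icc 0 1) (hT1 : T ⊆ Set.Icc 0 1) :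
    |∫ x in S, ∫ y in T, (w x y - w' x y)| ≤ cutDist w w' :=
  le_csSup ⟨1, fun r hr => cutSet_bddAbove hw hw' r hr⟩
    ⟨S, T, hSm, hTm, hS1, hT1, rfl⟩

lemma cutDist_symm (w w' : ℝ → ℝ → ℝ) : cutDist w w' = cutDist w' w := by
  have key : ∀ (u v : ℝ → ℝ → ℝ) (S T : Set ℝ),
      |∫ x in S, ∫ y in T, (u x y - v x y)| = |∫ x in S, ∫ y in T, (v x y - u x y)| := by
    intro u v S T
    have : (fun x => ∫ y in T, (u x y - v x y)) = fun x => -∫ y in T, (v x y - u x y) := by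
      funext x
      rw [← integral_neg]
      simp
    rw [this, integral_neg, abs_neg]
  unfold cutDist
  congr 1
  ext r
  constructor
  · rintro ⟨S, T, h1, h2, h3, h4, rfl⟩
    exact ⟨S, T, h1, h2, h3, h4, (key w w' S T)⟩
  · rintro ⟨S, T, h1, h2, h3, h4, rfl⟩
    exact ⟨S, T, h1, h2, h3, h4, (key w' w S T)⟩

end CutDist

section DegenFacts

open scoped ENNReal

variable {w w' : ℝ → ℝ → ℝ}

lemma Icc_fin : volume (Set.Icc (0:ℝ) 1) < ⊤ := by
  rw [Real.volume_Icc]; exact ENNReal.ofReal_lt_top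

lemma coreIter_zero_eq (hw : Graphon w) : ∀ n, coreIter w 0 n = Set.Icc 0 1
  | 0 => by
    refine Set.eq_of_subset_of_subset (sep_subset _ _) fun x hx => ?_
    exact ⟨hx, degK_nonneg hw _ x⟩
  | n + 1 => by
    have ih := coreIter_zero_eq hw n
    show {x ∈ coreIter w 0 n | (0:ℝ) ≤ degK w (coreIter w 0 n) x} = Set.Icc 0 1
    rw [ih]
    refine Set.eq_of_subset_of_subset (sep_subset _ _) fun x hx => ?_
    exact ⟨hx, degK_nonneg hw _ x⟩

lemma degen_set_mem_zero (hw : Graphon w) : 0 < volume (core w (0:ℝ)) := by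
  have : core w 0 = Set.Icc 0 1 := by
    unfold core
    rw [Set.iInter_congr (coreIter_zero_eq hw), Set.iInter_const]
  rw [this, Real.volume_Icc]
  simp

lemma degen_set_bddAbove (hw : Graphon w) :
    ∀ κ ∈ {κ : ℝ | 0 < volume (core w κ)}, κ ≤ 1 := by
  intro κ hκ
  obtain ⟨x, hx⟩ := nonempty_of_measure_ne_zero (ne_of_gt hκ)
  have hx0 : x ∈ coreIter w κ 0 := core_subset_coreIter w κ 0 hx
  have h1 : κ ≤ degK w (Set.Icc 0 1) x := hx0.2
  have h2 : degK w (Set.Icc 0 1) x ≤ (volume (Set.Icc (0:ℝ) 1)).toReal :=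
    degK_le hw measurableSet_Icc Icc_fin x
  rw [Real.volume_Icc] at h2
  simp only [sub_zero, ENNReal.toReal_ofReal zero_le_one] at h2
  linarith

lemma degen_nonneg (hw : Graphon w) : 0 ≤ degen w :=
  le_csSup ⟨1, fun r hr => degen_set_bddAbove hw r hr⟩ (degen_set_mem_zero hw)

end DegenFacts

section Main

open scoped ENNReal

variable {w w' : ℝ → ℝ → ℝ}

lemma integrableOn_degK (hw : Graphon w) {K A : Set ℝ} (hK : MeasurableSet K)
    (hKfin : volume K < ⊤) (hAfin : volume A < ⊤) :
    IntegrableOn (degK w K) A := by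
  have h1 : IntegrableOn (fun _ => (volume K).toReal) A volume :=
    integrableOn_const hAfin.ne
  refine Integrable.mono' h1 (degK_measurable hw K).aestronglyMeasurable ?_
  filter_upwards with x
  rw [Real.norm_eq_abs, abs_of_nonneg (degK_nonneg hw K x)]
  exact degK_le hw hK hKfin x

lemma core_lower (hw : Graphon w) (hw' : Graphon w') {κ η : ℝ}
    (hκ : 2 * Real.sqrt (cutDist w w') < κ) (hη : 0 < η)
    (hcore : 0 < volume (core w κ)) :
    0 < volume (core w' (κ - 2 * Real.sqrt (cutDist w w') - η)) := by
  set D := cutDist w w' with hDdef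
  have hD0 : 0 ≤ D := cutDist_nonneg hw hw'
  set s := Real.sqrt D with hsdef
  have hs0 : 0 ≤ s := Real.sqrt_nonneg D
  have hss : s * s = D := Real.mul_self_sqrt hD0
  set κ' := κ - 2 * s - η with hκ'def
  set S := core w κ with hSdef
  have hSm : MeasurableSet S := core_measurable hw κ
  have hS1 : S ⊆ Set.Icc 0 1 := core_subset_Icc w κ
  have hSfin : volume S < ⊤ := core_fin w κ
  have hdegS : ∀ x ∈ S, κ ≤ degK w S x := fun x hx => core_minDeg hw κ hx
  set B := coreIter w' κ' with hBdef
  have hBm : ∀ n, MeasurableSet (B n) := coreIter_measurable hw' κ'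
  have hBfin : ∀ n, volume (B n) < ⊤ := coreIter_fin w' κ'
  set T := fun n => S \ B n with hTdef
  have hTm : ∀ n, MeasurableSet (T n) := fun n => hSm.diff (hBm n)
  have hT1 : ∀ n, T n ⊆ Set.Icc 0 1 := fun n => Set.diff_subset.trans hS1
  have hTfin : ∀ n, volume (T n) < ⊤ := fun n =>
    lt_of_le_of_lt (measure_mono Set.diff_subset) hSfin
  have hTmono : Monotone T := fun m n hmn =>
    Set.diff_subset_diff_right (coreIter_antitone w' κ' hmn)
  set r := fun n => (volume (T n)).toReal with hrdef
  have hr0 : ∀ n, 0 ≤ r n := fun n => ENNReal.toReal_nonneg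
  have hrmono : Monotone r := fun m n hmn =>
    ENNReal.toReal_mono (ne_of_lt (hTfin n)) (measure_mono (hTmono hmn))
  -- base degree bound
  have Q0 : ∀ x ∈ T 0, degK w' S x < κ' := by
    rintro x ⟨hxS, hxB⟩
    have h1 : ¬ κ' ≤ degK w' (Set.Icc 0 1) x := fun h => hxB ⟨hS1 hxS, h⟩
    have h2 : degK w' S x ≤ degK w' (Set.Icc 0 1) x := degK_mono hw' hS1 Icc_fin x
    linarith [not_le.1 h1]
  -- peeling step degree bound
  have Qstep : ∀ n x, x ∈ S → x ∈ B n → x ∉ B (n + 1) → degK w' S x < κ' + r n := by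
    intro n x hxS hxB hxB'
    have h1 : ¬ κ' ≤ degK w' (B n) x := fun h => hxB' ⟨hxB, h⟩
    have h1' : degK w' (B n) x < κ' := not_le.1 h1
    have hdecomp : degK w' S x = degK w' (S ∩ B n) x + degK w' (T n) x := by
      have hunion : (S ∩ B n) ∪ (S \ B n) = S := Set.inter_union_diff S (B n)
      have hdisj : Disjoint (S ∩ B n) (S \ B n) :=
        Set.disjoint_left.2 fun a ha hb => hb.2 ha.2
      have := setIntegral_union (f := fun y => w' x y) (μ := volume) hdisj ?_ ?_ ?_
      · rw [hunion] at this; exact this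
      · exact hTm n
      · exact integrableOn_w hw' x (lt_of_le_of_lt (measure_mono Set.inter_subset_left) hSfin)
      · exact integrableOn_w hw' x (hTfin n)
    have h2 : degK w' (S ∩ B n) x ≤ degK w' (B n) x :=
      degK_mono hw' Set.inter_subset_right (hBfin n) x
    have h3 : degK w' (T n) x ≤ r n := degK_le hw' (hTm n) (hTfin n) x
    linarith [hdecomp]
  -- combined degree bound
  have Q : ∀ n, ∀ x ∈ T (n + 1), degK w' S x < κ' + r n := by
    intro n
    induction n with
    | zero =>
      rintro x ⟨hxS, hxB⟩
      by_cases h : x ∈ B 0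
      · exact Qstep 0 x hxS h hxB
      · exact (Q0 x ⟨hxS, h⟩).trans_le (by linarith [hr0 0])
    | succ n ih =>
      rintro x ⟨hxS, hxB⟩
      by_cases h : x ∈ B (n + 1)
      · exact Qstep (n + 1) x hxS h hxB
      · exact (ih x ⟨hxS, h⟩).trans_le (by linarith [hrmono (Nat.le_succ n)])
  -- integration inequality
  have J : ∀ (n : ℕ) (c : ℝ), 0 ≤ c → (∀ x ∈ T n, degK w' S x < κ' + c) →
      r n * (κ - κ' - c) ≤ D := by
    intro n c hc hQ
    have hcut : |∫ x in T n, ∫ y in S, (w x y - w' x y)| ≤ D :=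
      cutDist_bound hw hw' (hTm n) hSm (hT1 n) hS1
    have hfun : (fun x => ∫ y in S, (w x y - w' x y))
        = fun x => degK w S x - degK w' S x := by
      funext x
      exact integral_sub (integrableOn_w hw x hSfin) (integrableOn_w hw' x hSfin)
    have hint : IntegrableOn (fun x => degK w S x - degK w' S x) (T n) :=
      (integrableOn_degK hw hSm hSfin (hTfin n)).sub
        (integrableOn_degK hw' hSm hSfin (hTfin n))
    have hlow : ∫ x in T n, (κ - κ' - c) ≤ ∫ x in T n, (degK w S x - degK w' S x) := by
      refine setIntegral_mono_on (integrableOn_const (hTfin n).ne) hint (hTm n) ?_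
      intro x hx
      have h1 := hdegS x hx.1
      have h2 := hQ x hx
      linarith
    rw [setIntegral_const, smul_eq_mul] at hlow
    calc r n * (κ - κ' - c) = (volume (T n)).toReal * (κ - κ' - c) := rfl
      _ ≤ ∫ x in T n, (degK w S x - degK w' S x) := hlow
      _ = ∫ x in T n, ∫ y in S, (w x y - w' x y) := by rw [hfun]
      _ ≤ |∫ x in T n, ∫ y in S, (w x y - w' x y)| := le_abs_self _
      _ ≤ D := hcut
  -- the removed measure never exceeds √D
  have rbound : ∀ n, r n ≤ s := by
    intro n
    induction n with
    | zero =>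
      have hJ := J 0 0 le_rfl (fun x hx => by simpa using Q0 x hx)
      by_contra hlt
      push_neg at hlt
      nlinarith [hr0 0, hη, hs0, hss]
    | succ n ih =>
      have hJ := J (n + 1) (r n) (hr0 n) (Q n)
      by_contra hlt
      push_neg at hlt
      have ha : (0:ℝ) < r (n + 1) := lt_of_le_of_lt hs0 hlt
      nlinarith [hr0 n, hη, hs0, hss, mul_pos ha hη,
        mul_nonneg (le_of_lt ha) (sub_nonneg.2 ih)]
  -- conclude positive measure of the κ' core of w'
  have hTub : ∀ n, volume (T n) ≤ ENNReal.ofReal s := fun n =>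
    (ENNReal.le_ofReal_iff_toReal_le (ne_of_lt (hTfin n)) hs0).2 (rbound n)
  have hUnion : S \ core w' κ' = ⋃ n, T n := by
    rw [core, Set.diff_iInter]
  have htend : Tendsto (volume ∘ T) atTop (nhds (volume (⋃ n, T n))) :=
    tendsto_measure_iUnion_atTop hTmono
  have hdiff : volume (S \ core w' κ') ≤ ENNReal.ofReal s := by
    rw [hUnion]
    exact le_of_tendsto' htend hTub
  have hκpos : 0 < κ := lt_of_le_of_lt (by linarith) hκ
  have hsκ : s < κ := by linarith
  have hκS : ENNReal.ofReal κ ≤ volume S := by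
    obtain ⟨x, hx⟩ := nonempty_of_measure_ne_zero (ne_of_gt hcore)
    exact ENNReal.ofReal_le_of_le_toReal
      ((hdegS x hx).trans (degK_le hw hSm hSfin x))
  have hslt : ENNReal.ofReal s < ENNReal.ofReal κ :=
    (ENNReal.ofReal_lt_ofReal_iff hκpos).2 hsκ
  by_contra h0
  push_neg at h0
  have hzero : volume (core w' κ') = 0 := le_antisymm h0 zero_le
  have hint0 : volume (S ∩ core w' κ') = 0 :=
    le_antisymm ((measure_mono Set.inter_subset_right).trans hzero.le) zero_le
  have := measure_le_inter_add_diff volume S (core w' κ')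
  rw [hint0, zero_add] at this
  exact absurd ((hκS.trans this).trans hdiff) (not_le.2 hslt)

end Main

lemma degen_le {w w' : ℝ → ℝ → ℝ} (hw : Graphon w) (hw' : Graphon w') :
    degen w ≤ degen w' + 2 * Real.sqrt (cutDist w w') := by
  have hd0 : 0 ≤ degen w' := degen_nonneg hw'
  have hs0 : 0 ≤ Real.sqrt (cutDist w w') := Real.sqrt_nonneg _
  refine Real.sSup_le (fun κ hκ => ?_) (by linarith)
  rcases le_or_gt κ (2 * Real.sqrt (cutDist w w')) with h | h
  · linarith
  · have key : ∀ η, 0 < η → κ - 2 * Real.sqrt (cutDist w w') - η ≤ degen w' := by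
      intro η hη
      exact le_csSup ⟨1, fun r hr => degen_set_bddAbove hw' r hr⟩
        (core_lower hw hw' h hη hκ)
    have h2 : κ - 2 * Real.sqrt (cutDist w w') ≤ degen w' :=
      le_of_forall_pos_le_add fun ε hε => by linarith [key ε hε]
    linarith

theorem stmt14 (w w' : ℝ → ℝ → ℝ) (hw : Graphon w) (hw' : Graphon w') :
    |degen w - degen w'| ≤ 2 * Real.sqrt (cutDist w w') := by
  rw [abs_sub_le_iff]
  constructor
  · linarith [degen_le hw hw']
  · have := degen_le hw' hw
    rw [cutDist_symm w' w] at this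
    linarith
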